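/- (Improved geometry bound, quadratic variables) For every positive integer d ≥ 2 and every ε > 0 there exists a constant C = C(d, ε) such that the following holds. Let λ > 0 and X ≥ 1 be real, and let c₁, c₂, c₃ and X₁,…,X_d, Y₁,…,Y_d, Z₁,…,Z_d be positive integers that are admissible for (λ, X). Then B_d(c, X, Y, Z) ≤ C · (X^{λ+ε} / (P₁P₂) + X^{λ−1+ε} · P₂). -/

import Mathlib

/-- `dyadic x X` means `x ∈ [X, 2X)`. -/
def dyadic (x X : ℕ) : Prop := X ≤ x ∧ x < 2 * X

/-- `B d c₁ c₂ c₃ Xs Ys Zs` counts tuples `(x, y, z) ∈ ℕ^{3d}` with `x i ∼ Xs i`,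
`y i ∼ Ys i`, `z i ∼ Zs i`, satisfying `c₁ ∏ xᵢ^i + c₂ ∏ yᵢ^i = c₃ ∏ zᵢ^i` and
`gcd(c₁ ∏ xᵢ, c₂ ∏ yᵢ, c₃ ∏ zᵢ) = 1` (indices run through `1, …, d`). -/
noncomputable def B (d : ℕ) (c₁ c₂ c₃ : ℕ) (Xs Ys Zs : Fin d → ℕ) : ℕ :=
  Nat.card {t : (Fin d → ℕ) × (Fin d → ℕ) × (Fin d → ℕ) //
    (∀ i, dyadic (t.1 i) (Xs i)) ∧ (∀ i, dyadic (t.2.1 i) (Ys i)) ∧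
    (∀ i, dyadic (t.2.2 i) (Zs i)) ∧
    c₁ * ∏ i, t.1 i ^ (i.val + 1) + c₂ * ∏ i, t.2.1 i ^ (i.val + 1)
      = c₃ * ∏ i, t.2.2 i ^ (i.val + 1) ∧
    Nat.gcd (c₁ * ∏ i, t.1 i) (Nat.gcd (c₂ * ∏ i, t.2.1 i) (c₃ * ∏ i, t.2.2 i)) = 1}

/-- The parameters are admissible for `(lam, X)`: all are positive,
`∏ᵢ XᵢYᵢZᵢ ∈ [X^lam, 2X^lam)` and `max(∏ Xᵢ^i, ∏ Yᵢ^i, ∏ Zᵢ^i) ∈ [X, 2X)`. -/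
def Admissible (d : ℕ) (lam X : ℝ) (c₁ c₂ c₃ : ℕ) (Xs Ys Zs : Fin d → ℕ) : Prop :=
  0 < c₁ ∧ 0 < c₂ ∧ 0 < c₃ ∧
  (∀ i, 0 < Xs i) ∧ (∀ i, 0 < Ys i) ∧ (∀ i, 0 < Zs i) ∧
  X ^ lam ≤ ((∏ i, Xs i * Ys i * Zs i : ℕ) : ℝ) ∧
  ((∏ i, Xs i * Ys i * Zs i : ℕ) : ℝ) < 2 * X ^ lam ∧
  X ≤ ((max (∏ i, Xs i ^ (i.val + 1))
        (max (∏ i, Ys i ^ (i.val + 1)) (∏ i, Zs i ^ (i.val + 1))) : ℕ) : ℝ) ∧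
  ((max (∏ i, Xs i ^ (i.val + 1))
        (max (∏ i, Ys i ^ (i.val + 1)) (∏ i, Zs i ^ (i.val + 1))) : ℕ) : ℝ) < 2 * X

/-!
Write `d = n + 2` and split every vector into its first two coordinates and its tail. There are at
most `∏ Pᵢ / (P₁ P₂)` tails. Once the tails are fixed, the equation reads `A u + B v = C w` with
`u = x₁ x₂²`, `v = y₁ y₂²`, `w = z₁ z₂²`, and the coprimality condition makes `(u, v, w)` a
primitive solution. Two primitive solutions with the same ratio `u : v` coincide, and otherwise
their cross determinant `v u' - v' u` is a nonzero multiple of `C`. Sorting by the slope `v / u`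
therefore shows that at most `≪ U V / C + 1` triples `(u, v, w)` occur, where `u ∼ U`, `v ∼ V`,
`w ∼ W`; and `C ≫ X / W` because `C w` is the largest term of the equation. Finally each
`(u, v, w)` comes from at most `τ(u) τ(v) τ(w) ≪ X^ε` solutions, by the divisor bound.
-/

open Finset

section DivisorBound

open Real

theorem add_one_le_mul_two_rpow {ε : ℝ} (hε : 0 < ε) (a : ℕ) :
    (a : ℝ) + 1 ≤ (1 + 1 / (ε * log 2)) * (2 : ℝ) ^ (a * ε) := by
  have hL : 0 < ε * log 2 := mul_pos hε (log_pos one_lt_two)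
  have hexp : a * (ε * log 2) + 1 ≤ (2 : ℝ) ^ (a * ε) := by
    rw [rpow_def_of_pos two_pos, ← mul_assoc, mul_comm (log 2)]
    exact add_one_le_exp _
  have ha : (0 : ℝ) ≤ a := a.cast_nonneg
  calc (a : ℝ) + 1 ≤ (1 + 1 / (ε * log 2)) * (a * (ε * log 2) + 1) := by
        rw [add_mul, one_mul, one_div, inv_mul_eq_div, add_div, mul_div_cancel_right₀ _ hL.ne']
        have : 0 ≤ 1 / (ε * log 2) := by positivity
        nlinarith
    _ ≤ (1 + 1 / (ε * log 2)) * (2 : ℝ) ^ (a * ε) := by gcongr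

theorem add_one_le_mul_rpow_pow {ε : ℝ} (hε : 0 < ε) {p : ℕ} (hp : 2 ≤ p) (a : ℕ) :
    (a : ℝ) + 1 ≤ (1 + 1 / (ε * log 2)) * ((p ^ a : ℕ) : ℝ) ^ ε := by
  refine (add_one_le_mul_two_rpow hε a).trans ?_
  have h2p : (2 : ℝ) ≤ p := by exact_mod_cast hp
  have hc : 0 ≤ 1 + 1 / (ε * log 2) := by
    have := log_pos one_lt_two; positivity
  rw [Nat.cast_pow, ← rpow_natCast, ← rpow_mul (by positivity)]
  gcongr

theorem add_one_le_rpow_pow {ε : ℝ} {p : ℕ} (hp : 2 ≤ (p : ℝ) ^ ε) (a : ℕ) :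
    (a : ℝ) + 1 ≤ ((p ^ a : ℕ) : ℝ) ^ ε := by
  rw [Nat.cast_pow, ← rpow_natCast, ← rpow_mul p.cast_nonneg, mul_comm, rpow_mul p.cast_nonneg,
    rpow_natCast]
  calc (a : ℝ) + 1 ≤ 2 ^ a := by exact_mod_cast Nat.lt_two_pow_self
    _ ≤ _ := pow_le_pow_left₀ zero_le_two hp a

theorem exists_card_divisors_le_mul_rpow {ε : ℝ} (hε : 0 < ε) :
    ∃ C : ℝ, ∀ n : ℕ, n ≠ 0 → (#n.divisors : ℝ) ≤ C * (n : ℝ) ^ ε := by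
  set c : ℝ := 1 + 1 / (ε * log 2)
  have hc : 1 ≤ c := by
    have := log_pos one_lt_two; simp only [c]; linarith [show 0 ≤ 1 / (ε * log 2) by positivity]
  set K : ℕ := ⌈(2 : ℝ) ^ (1 / ε)⌉₊
  refine ⟨c ^ K, fun n hn => ?_⟩
  set g : ℕ → ℝ := fun p => if p < K then c else 1
  -- Only the primes below `K` can have `(a + 1) > (p ^ a) ^ ε`.
  have hfactor : ∀ p ∈ n.primeFactors,
      ((n.factorization p : ℕ) : ℝ) + 1 ≤ g p * ((p ^ n.factorization p : ℕ) : ℝ) ^ ε := by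
    intro p hp
    have hp2 := (Nat.prime_of_mem_primeFactors hp).two_le
    by_cases hpK : p < K
    · simp only [g, hpK, if_true]
      exact add_one_le_mul_rpow_pow hε hp2 _
    · simp only [g, hpK, if_false, one_mul]
      refine add_one_le_rpow_pow ?_ _
      have hKp : (2 : ℝ) ^ (1 / ε) ≤ p := (Nat.le_ceil _).trans (by exact_mod_cast not_lt.1 hpK)
      calc (2 : ℝ) = ((2 : ℝ) ^ (1 / ε)) ^ ε := by
            rw [← rpow_mul zero_le_two, one_div_mul_cancel hε.ne', rpow_one]
        _ ≤ (p : ℝ) ^ ε := by gcongr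
  have hg : ∏ p ∈ n.primeFactors, g p ≤ c ^ K := by
    rw [prod_ite, prod_const_one, mul_one, prod_const]
    refine pow_le_pow_right₀ hc ((card_le_card fun p hp => ?_).trans_eq (card_range K))
    exact mem_range.2 (mem_filter.1 hp).2
  calc (#n.divisors : ℝ) = ∏ p ∈ n.primeFactors, (((n.factorization p : ℕ) : ℝ) + 1) := by
        rw [Nat.card_divisors hn]; push_cast; rfl
    _ ≤ ∏ p ∈ n.primeFactors, g p * ((p ^ n.factorization p : ℕ) : ℝ) ^ ε :=
        prod_le_prod (fun _ _ => by positivity) hfactor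
    _ = (∏ p ∈ n.primeFactors, g p) * (n : ℝ) ^ ε := by
        rw [prod_mul_distrib, finsetProd_rpow _ _ (fun _ _ => by positivity), ← Nat.cast_prod,
          ← Nat.prod_primeFactors_pow_factorization hn]
    _ ≤ c ^ K * (n : ℝ) ^ ε := by gcongr

end DivisorBound

theorem Finset.natCast_card_le_card_image_mul {R α β : Type*} [Semiring R] [PartialOrder R]
    [IsOrderedRing R] [DecidableEq β] {s : Finset α} {f : α → β} {F : R}
    (h : ∀ b ∈ s.image f, (#(s.filter (f · = b)) : R) ≤ F) :
    (#s : R) ≤ #(s.image f) * F := by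
  rw [card_eq_sum_card_image f s, Nat.cast_sum, ← nsmul_eq_mul, ← sum_const]
  exact sum_le_sum h

theorem Nat.gcd_gcd_eq_one_of_dvd_pow {a b c a' b' c' k : ℕ} (ha : a' ∣ a ^ k) (hb : b' ∣ b ^ k)
    (hc : c' ∣ c ^ k) (h : Nat.gcd a (Nat.gcd b c) = 1) : Nat.gcd a' (Nat.gcd b' c') = 1 := by
  have hk : Nat.Coprime (a ^ k) (Nat.gcd (b ^ k) (c ^ k)) := by
    rw [Nat.pow_gcd_pow]; exact Nat.Coprime.pow k k h
  exact Nat.Coprime.of_dvd ha (Nat.gcd_dvd_gcd_of_dvd_left _ hb |>.trans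
    (Nat.gcd_dvd_gcd_of_dvd_right _ hc)) hk

def IsPrimitiveSolution (A B C : ℕ) (s : ℕ × ℕ × ℕ) : Prop :=
  A * s.1 + B * s.2.1 = C * s.2.2 ∧ Nat.gcd (A * s.1) (Nat.gcd (B * s.2.1) (C * s.2.2)) = 1

namespace IsPrimitiveSolution

variable {A B C : ℕ} {s t : ℕ × ℕ × ℕ}

theorem coprime (hs : IsPrimitiveSolution A B C s) : Nat.Coprime C A := by
  have hCA : Nat.gcd C A ∣ B * s.2.1 := by
    rw [← Nat.add_sub_cancel_left (n := A * s.1) (m := B * s.2.1), hs.1]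
    exact Nat.dvd_sub (dvd_mul_of_dvd_left (Nat.gcd_dvd_left _ _) _)
      (dvd_mul_of_dvd_left (Nat.gcd_dvd_right _ _) _)
  refine Nat.eq_one_of_dvd_one (hs.2 ▸ Nat.dvd_gcd ?_ (Nat.dvd_gcd hCA ?_))
  · exact dvd_mul_of_dvd_left (Nat.gcd_dvd_right _ _) _
  · exact dvd_mul_of_dvd_left (Nat.gcd_dvd_left _ _) _

theorem gcd_gcd_eq_one (hs : IsPrimitiveSolution A B C s) :
    Nat.gcd s.1 (Nat.gcd s.2.1 s.2.2) = 1 := by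
  refine Nat.gcd_gcd_eq_one_of_dvd_pow (k := 1) ?_ ?_ ?_ hs.2 <;>
    exact (pow_one (_ : ℕ)).symm ▸ dvd_mul_left _ _

theorem dvd_of_mul_eq (hs : IsPrimitiveSolution A B C s) (hv : s.2.1 * t.1 = t.2.1 * s.1)
    (hw : s.2.2 * t.1 = t.2.2 * s.1) : s.1 ∣ t.1 := by
  have h : s.1 ∣ t.1 * Nat.gcd s.1 (Nat.gcd s.2.1 s.2.2) := by
    rw [← Nat.gcd_mul_left, ← Nat.gcd_mul_left]
    refine Nat.dvd_gcd (dvd_mul_left _ _) (Nat.dvd_gcd ⟨t.2.1, ?_⟩ ⟨t.2.2, ?_⟩)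
    · rw [mul_comm, hv, mul_comm]
    · rw [mul_comm, hw, mul_comm]
  rwa [hs.gcd_gcd_eq_one, mul_one] at h

theorem eq_of_mul_eq (hC : 0 < C) (hs : IsPrimitiveSolution A B C s)
    (ht : IsPrimitiveSolution A B C t) (hsu : 0 < s.1) (htu : 0 < t.1)
    (hv : s.2.1 * t.1 = t.2.1 * s.1) : s = t := by
  have hw : s.2.2 * t.1 = t.2.2 * s.1 := by
    refine Nat.eq_of_mul_eq_mul_left hC ?_
    calc C * (s.2.2 * t.1) = (A * s.1 + B * s.2.1) * t.1 := by rw [hs.1]; ring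
      _ = A * (s.1 * t.1) + B * (t.2.1 * s.1) := by rw [← hv]; ring
      _ = C * t.2.2 * s.1 := by rw [← ht.1]; ring
      _ = C * (t.2.2 * s.1) := by ring
  have hu : s.1 = t.1 :=
    Nat.dvd_antisymm (hs.dvd_of_mul_eq hv hw) (ht.dvd_of_mul_eq hv.symm hw.symm)
  rw [hu] at hv hw
  obtain ⟨s₁, s₂, s₃⟩ := s
  obtain ⟨t₁, t₂, t₃⟩ := t
  simp only at hu hv hw ⊢
  rw [hu, Nat.eq_of_mul_eq_mul_right htu hv, Nat.eq_of_mul_eq_mul_right htu hw]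

theorem le_abs_mul_sub_mul (hs : IsPrimitiveSolution A B C s) (ht : IsPrimitiveSolution A B C t)
    (hne : s.2.1 * t.1 ≠ t.2.1 * s.1) :
    (C : ℤ) ≤ |(s.2.1 : ℤ) * t.1 - t.2.1 * s.1| := by
  have hs' : (A : ℤ) * s.1 + B * s.2.1 = C * s.2.2 := by exact_mod_cast hs.1
  have ht' : (A : ℤ) * t.1 + B * t.2.1 = C * t.2.2 := by exact_mod_cast ht.1
  have hdvd : (C : ℤ) ∣ A * (s.2.1 * t.1 - t.2.1 * s.1) :=
    ⟨s.2.1 * t.2.2 - t.2.1 * s.2.2, by linear_combination (s.2.1 : ℤ) * ht' - (t.2.1 : ℤ) * hs'⟩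
  have hcop : IsCoprime (C : ℤ) A := Int.isCoprime_iff_gcd_eq_one.2 (by exact_mod_cast hs.coprime)
  refine Int.le_of_dvd (abs_pos.2 ?_) ((dvd_abs _ _).2 (hcop.dvd_of_dvd_mul_left hdvd))
  exact sub_ne_zero.2 (by exact_mod_cast hne)

theorem one_lt_abs_sub_div {M : ℕ} (hC : 0 < C)
    (hs : IsPrimitiveSolution A B C s) (ht : IsPrimitiveSolution A B C t) (hs₀ : 0 < s.1)
    (ht₀ : 0 < t.1) (hsM : s.1 < M) (htM : t.1 < M) (hne : s ≠ t) :
    1 < |(s.2.1 * M ^ 2 / (s.1 * C) : ℝ) - t.2.1 * M ^ 2 / (t.1 * C)| := by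
  have hcross : s.2.1 * t.1 ≠ t.2.1 * s.1 := fun h => hne (hs.eq_of_mul_eq hC ht hs₀ ht₀ h)
  have hdet : (C : ℝ) ≤ |(s.2.1 : ℝ) * t.1 - t.2.1 * s.1| := by
    exact_mod_cast hs.le_abs_mul_sub_mul ht hcross
  have hCr : (0 : ℝ) < C := by exact_mod_cast hC
  have hs₀r : (0 : ℝ) < s.1 := by exact_mod_cast hs₀
  have ht₀r : (0 : ℝ) < t.1 := by exact_mod_cast ht₀
  have hMM : (s.1 : ℝ) * t.1 < (M : ℝ) ^ 2 := by rw [sq]; gcongr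
  have hdiff : (s.2.1 * M ^ 2 / (s.1 * C) : ℝ) - t.2.1 * M ^ 2 / (t.1 * C) =
      M ^ 2 * ((s.2.1 : ℝ) * t.1 - t.2.1 * s.1) / (s.1 * t.1 * C) := by
    field_simp
  rw [hdiff, abs_div, abs_mul, abs_of_pos (by positivity : (0 : ℝ) < s.1 * t.1 * C),
    abs_of_nonneg (by positivity : (0 : ℝ) ≤ (M : ℝ) ^ 2), one_lt_div (by positivity)]
  nlinarith [mul_le_mul_of_nonneg_left hdet (by positivity : (0 : ℝ) ≤ (M : ℝ) ^ 2)]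

end IsPrimitiveSolution

/-- The solutions are sorted into `⌊N M² / (U C)⌋ + 1` boxes by their scaled slope, at most one
per box. -/
theorem card_le_of_isPrimitiveSolution {A B C U M N : ℕ} (hC : 0 < C) (hU : 0 < U)
    {S : Finset (ℕ × ℕ × ℕ)}
    (hS : ∀ s ∈ S, IsPrimitiveSolution A B C s ∧ U ≤ s.1 ∧ s.1 < M ∧ s.2.1 ≤ N) :
    (#S : ℝ) ≤ N * M ^ 2 / (U * C) + 1 := by
  set r : ℕ × ℕ × ℕ → ℝ := fun s => s.2.1 * M ^ 2 / (s.1 * C)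
  have hpos : ∀ s ∈ S, 0 < s.1 := fun s hs => hU.trans_le (hS s hs).2.1
  have hr_nonneg : ∀ s, 0 ≤ r s := fun s => by positivity
  have hr_le : ∀ s ∈ S, r s ≤ N * M ^ 2 / (U * C) := by
    intro s hs
    obtain ⟨-, hUs, -, hN⟩ := hS s hs
    have hUr : (0 : ℝ) < U := by exact_mod_cast hU
    have hCr : (0 : ℝ) < C := by exact_mod_cast hC
    exact div_le_div₀ (by positivity) (by gcongr) (by positivity) (by gcongr)
  have hinj : Set.InjOn (fun s => ⌊r s⌋₊) S := by
    intro s hs t ht hst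
    by_contra hne
    have hfar := (hS s hs).1.one_lt_abs_sub_div hC (hS t ht).1 (hpos s hs) (hpos t ht)
      (hS s hs).2.2.1 (hS t ht).2.2.1 hne
    have := Nat.floor_le (hr_nonneg s); have := Nat.lt_floor_add_one (r s)
    have := Nat.floor_le (hr_nonneg t); have := Nat.lt_floor_add_one (r t)
    have e : (⌊r s⌋₊ : ℝ) = ⌊r t⌋₊ := by exact_mod_cast hst
    rw [lt_abs] at hfar
    rcases hfar with h | h <;> linarith
  have hmaps : Set.MapsTo (fun s => ⌊r s⌋₊) S (range (⌊(N * M ^ 2 / (U * C) : ℝ)⌋₊ + 1)) :=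
    fun s hs => mem_range.2 (Nat.lt_succ_of_le (Nat.floor_le_floor (hr_le s hs)))
  calc (#S : ℝ) ≤ (⌊(N * M ^ 2 / (U * C) : ℝ)⌋₊ + 1 : ℕ) := by
        exact_mod_cast (card_le_card_of_injOn _ hmaps hinj).trans_eq (card_range _)
    _ ≤ N * M ^ 2 / (U * C) + 1 := by
        push_cast; gcongr; exact Nat.floor_le (by positivity)

abbrev Triple (d : ℕ) := (Fin d → ℕ) × (Fin d → ℕ) × (Fin d → ℕ)

section Box

variable {d : ℕ}

def weight (W : Fin d → ℕ) : ℕ := ∏ i, W i ^ (i.val + 1)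

def maxWeight (Xs Ys Zs : Fin d → ℕ) : ℕ := max (weight Xs) (max (weight Ys) (weight Zs))

def dyadicBox (W : Fin d → ℕ) : Finset (Fin d → ℕ) :=
  Fintype.piFinset fun i => Ico (W i) (2 * W i)

theorem mem_dyadicBox {W f : Fin d → ℕ} : f ∈ dyadicBox W ↔ ∀ i, dyadic (f i) (W i) := by
  simp [dyadicBox, dyadic]

theorem card_dyadicBox (W : Fin d → ℕ) : #(dyadicBox W) = ∏ i, W i := by
  simp only [dyadicBox, Fintype.card_piFinset, Nat.card_Ico]
  exact prod_congr rfl fun i _ => by omega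

theorem pos_of_mem_dyadicBox {W f : Fin d → ℕ} (hW : ∀ i, 0 < W i) (hf : f ∈ dyadicBox W)
    (i : Fin d) : 0 < f i :=
  (hW i).trans_le (mem_dyadicBox.1 hf i).1

theorem weight_le_of_mem_dyadicBox {W f : Fin d → ℕ} (hf : f ∈ dyadicBox W) :
    weight W ≤ weight f :=
  prod_le_prod' fun i _ => Nat.pow_le_pow_left (mem_dyadicBox.1 hf i).1 _

theorem mul_weight_dvd_pow (hd : d ≠ 0) (c : ℕ) (f : Fin d → ℕ) :
    c * weight f ∣ (c * ∏ i, f i) ^ d := by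
  rw [weight, mul_pow, ← prod_pow]
  exact mul_dvd_mul (dvd_pow_self c hd) (prod_dvd_prod_of_dvd _ _ fun i _ => pow_dvd_pow _ i.isLt)

end Box

def solutionSet {d : ℕ} (c₁ c₂ c₃ : ℕ) (Xs Ys Zs : Fin d → ℕ) : Finset (Triple d) :=
  (dyadicBox Xs ×ˢ dyadicBox Ys ×ˢ dyadicBox Zs).filter fun t =>
    c₁ * weight t.1 + c₂ * weight t.2.1 = c₃ * weight t.2.2 ∧
    Nat.gcd (c₁ * ∏ i, t.1 i) (Nat.gcd (c₂ * ∏ i, t.2.1 i) (c₃ * ∏ i, t.2.2 i)) = 1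

section Solutions

variable {d : ℕ} {c₁ c₂ c₃ : ℕ} {Xs Ys Zs : Fin d → ℕ}

theorem B_eq_card_solutionSet : B d c₁ c₂ c₃ Xs Ys Zs = #(solutionSet c₁ c₂ c₃ Xs Ys Zs) := by
  rw [B, ← Nat.card_eq_finsetCard]
  refine Nat.card_congr (Equiv.subtypeEquivRight fun t => ?_)
  simp only [solutionSet, mem_filter, mem_product, mem_dyadicBox, and_assoc]
  rfl

theorem mem_dyadicBox_of_mem_solutionSet {t : Triple d}
    (ht : t ∈ solutionSet c₁ c₂ c₃ Xs Ys Zs) :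
    t.1 ∈ dyadicBox Xs ∧ t.2.1 ∈ dyadicBox Ys ∧ t.2.2 ∈ dyadicBox Zs := by
  simpa only [mem_product] using (mem_filter.1 ht).1

theorem pos_of_mem_solutionSet (hXs : ∀ i, 0 < Xs i) (hYs : ∀ i, 0 < Ys i)
    (hZs : ∀ i, 0 < Zs i) {t : Triple d} (ht : t ∈ solutionSet c₁ c₂ c₃ Xs Ys Zs) :
    (∀ i, 0 < t.1 i) ∧ (∀ i, 0 < t.2.1 i) ∧ (∀ i, 0 < t.2.2 i) :=
  have h := mem_dyadicBox_of_mem_solutionSet ht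
  ⟨pos_of_mem_dyadicBox hXs h.1, pos_of_mem_dyadicBox hYs h.2.1, pos_of_mem_dyadicBox hZs h.2.2⟩

theorem maxWeight_le_of_mem_solutionSet {t : Triple d} (hc₁ : 0 < c₁) (hc₂ : 0 < c₂)
    (hc₃ : 0 < c₃) (ht : t ∈ solutionSet c₁ c₂ c₃ Xs Ys Zs) :
    maxWeight Xs Ys Zs ≤ c₃ * weight t.2.2 := by
  obtain ⟨hx, hy, hz⟩ := mem_dyadicBox_of_mem_solutionSet ht
  have heq := (mem_filter.1 ht).2.1
  have hx' := (weight_le_of_mem_dyadicBox hx).trans (Nat.le_mul_of_pos_left _ hc₁)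
  have hy' := (weight_le_of_mem_dyadicBox hy).trans (Nat.le_mul_of_pos_left _ hc₂)
  have hz' := (weight_le_of_mem_dyadicBox hz).trans (Nat.le_mul_of_pos_left _ hc₃)
  refine max_le ?_ (max_le ?_ hz') <;> omega

end Solutions

section SplitOffTwo

variable {n : ℕ}

def tail₂ (f : Fin (n + 2) → ℕ) : Fin n → ℕ := fun i => f i.succ.succ

def quadPart (f : Fin (n + 2) → ℕ) : ℕ := f 0 * f 1 ^ 2

-- Coordinate `i` of the tail is coordinate `i + 2` of the vector, which carries exponent `i + 3`.
def tailWeight (g : Fin n → ℕ) : ℕ := ∏ i, g i ^ (i.val + 3)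

theorem weight_eq_quadPart_mul (f : Fin (n + 2) → ℕ) :
    weight f = quadPart f * tailWeight (tail₂ f) := by
  simp only [weight, Fin.prod_univ_succ, quadPart, tailWeight, tail₂, Fin.val_succ, Fin.val_zero,
    Fin.succ_zero_eq_one]
  ring

theorem prod_eq_mul_prod_tail₂ (f : Fin (n + 2) → ℕ) :
    ∏ i, f i = f 0 * f 1 * ∏ i, tail₂ f i := by
  simp only [Fin.prod_univ_succ, tail₂, Fin.succ_zero_eq_one]
  ring

theorem eq_of_tail₂_eq {f g : Fin (n + 2) → ℕ} (h₀ : f 0 = g 0) (h₁ : f 1 = g 1)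
    (h : tail₂ f = tail₂ g) : f = g := by
  funext i
  exact Fin.cases h₀ (Fin.cases h₁ (congrFun h)) i

theorem tail₂_mem_dyadicBox {W f : Fin (n + 2) → ℕ} (hf : f ∈ dyadicBox W) :
    tail₂ f ∈ dyadicBox (tail₂ W) :=
  mem_dyadicBox.2 fun _ => mem_dyadicBox.1 hf _

theorem quadPart_le_weight {W : Fin (n + 2) → ℕ} (hW : ∀ i, 0 < W i) :
    quadPart W ≤ weight W := by
  rw [weight_eq_quadPart_mul]
  exact Nat.le_mul_of_pos_right _ (prod_pos fun _ _ => pow_pos (hW _) _)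

theorem quadPart_lt_of_mem_dyadicBox {W f : Fin (n + 2) → ℕ} (hf : f ∈ dyadicBox W) :
    quadPart f < 8 * quadPart W := by
  have h₀ := (mem_dyadicBox.1 hf 0).2
  have h₁ := (mem_dyadicBox.1 hf 1).2
  calc quadPart f < 2 * W 0 * (2 * W 1) ^ 2 := by
        unfold quadPart; gcongr
    _ = 8 * quadPart W := by unfold quadPart; ring

theorem le_quadPart_of_mem_dyadicBox {W f : Fin (n + 2) → ℕ} (hf : f ∈ dyadicBox W) :
    quadPart W ≤ quadPart f := by
  unfold quadPart; gcongr <;> exact (mem_dyadicBox.1 hf _).1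

theorem eq_of_quadPart_eq {f g : Fin (n + 2) → ℕ} (hf : 0 < f 1) (hq : quadPart f = quadPart g)
    (h₁ : f 1 = g 1) (h : tail₂ f = tail₂ g) : f = g := by
  rw [quadPart, quadPart, ← h₁] at hq
  exact eq_of_tail₂_eq (Nat.eq_of_mul_eq_mul_right (pow_pos hf 2) hq) h₁ h

theorem mem_divisors_quadPart {f : Fin (n + 2) → ℕ} (h₀ : 0 < f 0) (h₁ : 0 < f 1) :
    f 1 ∈ (quadPart f).divisors :=
  Nat.mem_divisors.2 ⟨⟨f 0 * f 1, by unfold quadPart; ring⟩, by unfold quadPart; positivity⟩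

theorem card_divisors_quadPart_le {K δ X : ℝ}
    (hK : ∀ m : ℕ, m ≠ 0 → (#m.divisors : ℝ) ≤ K * (m : ℝ) ^ δ) (hK₀ : 0 ≤ K) (hδ : 0 ≤ δ)
    {W f : Fin (n + 2) → ℕ} (hW : ∀ i, 0 < W i) (hf : f ∈ dyadicBox W)
    (hWX : (weight W : ℝ) < 2 * X) :
    (#(quadPart f).divisors : ℝ) ≤ K * (16 * X) ^ δ := by
  have hpos : 0 < quadPart f := by
    have := pos_of_mem_dyadicBox hW hf 0; have := pos_of_mem_dyadicBox hW hf 1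
    unfold quadPart; positivity
  have hfX : (quadPart f : ℝ) ≤ 16 * X := by
    have : (quadPart f : ℝ) ≤ 8 * weight W := by
      exact_mod_cast (quadPart_lt_of_mem_dyadicBox hf).le.trans
        (Nat.mul_le_mul_left 8 (quadPart_le_weight hW))
    linarith
  exact (hK _ hpos.ne').trans (by gcongr)

end SplitOffTwo

section Fibers

variable {n : ℕ} {c₁ c₂ c₃ : ℕ} {Xs Ys Zs : Fin (n + 2) → ℕ}

def tails (t : Triple (n + 2)) : Triple n := (tail₂ t.1, tail₂ t.2.1, tail₂ t.2.2)

def quadParts (t : Triple (n + 2)) : ℕ × ℕ × ℕ := (quadPart t.1, quadPart t.2.1, quadPart t.2.2)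

theorem isPrimitiveSolution_quadParts {t : Triple (n + 2)}
    (ht : t ∈ solutionSet c₁ c₂ c₃ Xs Ys Zs) :
    IsPrimitiveSolution (c₁ * tailWeight (tail₂ t.1)) (c₂ * tailWeight (tail₂ t.2.1))
      (c₃ * tailWeight (tail₂ t.2.2)) (quadParts t) := by
  obtain ⟨-, heq, hgcd⟩ := mem_filter.1 ht
  have hform : ∀ (c : ℕ) (f : Fin (n + 2) → ℕ),
      c * tailWeight (tail₂ f) * quadPart f = c * weight f := fun c f => by
    rw [weight_eq_quadPart_mul]; ring
  simp only [IsPrimitiveSolution, quadParts, hform]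
  exact ⟨heq, Nat.gcd_gcd_eq_one_of_dvd_pow (mul_weight_dvd_pow (by omega) _ _)
    (mul_weight_dvd_pow (by omega) _ _) (mul_weight_dvd_pow (by omega) _ _) hgcd⟩

theorem card_image_tails_mul_le :
    #((solutionSet c₁ c₂ c₃ Xs Ys Zs).image tails) * ((Xs 0 * Ys 0 * Zs 0) * (Xs 1 * Ys 1 * Zs 1))
      ≤ ∏ i, Xs i * Ys i * Zs i := by
  have hsub : (solutionSet c₁ c₂ c₃ Xs Ys Zs).image tails ⊆
      dyadicBox (tail₂ Xs) ×ˢ dyadicBox (tail₂ Ys) ×ˢ dyadicBox (tail₂ Zs) := by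
    intro b hb
    obtain ⟨t, ht, rfl⟩ := mem_image.1 hb
    obtain ⟨hx, hy, hz⟩ := mem_dyadicBox_of_mem_solutionSet ht
    exact mem_product.2 ⟨tail₂_mem_dyadicBox hx,
      mem_product.2 ⟨tail₂_mem_dyadicBox hy, tail₂_mem_dyadicBox hz⟩⟩
  refine (Nat.mul_le_mul_right _ (card_le_card hsub)).trans_eq ?_
  rw [card_product, card_product, card_dyadicBox, card_dyadicBox, card_dyadicBox,
    prod_eq_mul_prod_tail₂ (fun i => Xs i * Ys i * Zs i)]
  simp only [tail₂, prod_mul_distrib]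
  ring

variable (hXs : ∀ i, 0 < Xs i) (hYs : ∀ i, 0 < Ys i) (hZs : ∀ i, 0 < Zs i)
include hXs hYs hZs

/-- Once the tails are fixed, a solution is determined by its quadratic parts `(u, v, w)`
together with its squared coordinates, which divide `u`, `v`, `w`. -/
theorem card_filter_quadParts_eq_le (b : Triple n) (q : ℕ × ℕ × ℕ) :
    #(((solutionSet c₁ c₂ c₃ Xs Ys Zs).filter (tails · = b)).filter (quadParts · = q)) ≤
      #q.1.divisors * (#q.2.1.divisors * #q.2.2.divisors) := by
  rw [← card_product, ← card_product]
  refine card_le_card_of_injOn (fun t => (t.1 1, t.2.1 1, t.2.2 1)) (fun t ht => ?_)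
    (fun t ht t' ht' h => ?_)
  · obtain ⟨⟨hS, -⟩, rfl⟩ := mem_filter.1 ht |>.imp_left mem_filter.1
    obtain ⟨hx, hy, hz⟩ := pos_of_mem_solutionSet hXs hYs hZs hS
    simp only [coe_product, Set.mem_prod, mem_coe, quadParts]
    exact ⟨mem_divisors_quadPart (hx 0) (hx 1), mem_divisors_quadPart (hy 0) (hy 1),
      mem_divisors_quadPart (hz 0) (hz 1)⟩
  · obtain ⟨⟨hS, hb⟩, hq⟩ := mem_filter.1 ht |>.imp_left mem_filter.1
    obtain ⟨⟨-, hb'⟩, hq'⟩ := mem_filter.1 ht' |>.imp_left mem_filter.1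
    obtain ⟨hx, hy, hz⟩ := pos_of_mem_solutionSet hXs hYs hZs hS
    rw [← hq'] at hq
    rw [← hb'] at hb
    simp only [quadParts, tails, Prod.mk.injEq] at h hq hb
    exact Prod.ext (eq_of_quadPart_eq (hx 1) hq.1 h.1 hb.1)
      (Prod.ext (eq_of_quadPart_eq (hy 1) hq.2.1 h.2.1 hb.2.1)
        (eq_of_quadPart_eq (hz 1) hq.2.2 h.2.2 hb.2.2))

theorem card_filter_tails_eq_le_mul (hc₃ : 0 < c₃) {D : ℝ} (hD₀ : 0 ≤ D)
    (hD : ∀ t ∈ solutionSet c₁ c₂ c₃ Xs Ys Zs, (#(quadPart t.1).divisors *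
      (#(quadPart t.2.1).divisors * #(quadPart t.2.2).divisors) : ℝ) ≤ D)
    {b : Triple n} (hb : b ∈ (solutionSet c₁ c₂ c₃ Xs Ys Zs).image tails) :
    (#((solutionSet c₁ c₂ c₃ Xs Ys Zs).filter (tails · = b)) : ℝ) ≤
      (512 * quadPart Xs * quadPart Ys / (c₃ * tailWeight b.2.2) + 1) * D := by
  obtain ⟨t₀, ht₀, rfl⟩ := mem_image.1 hb
  refine (natCast_card_le_card_image_mul (f := quadParts) (F := D) fun q hq => ?_).trans ?_
  · obtain ⟨t, ht, rfl⟩ := mem_image.1 hq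
    refine le_trans ?_ (hD t (mem_filter.1 ht).1)
    exact_mod_cast card_filter_quadParts_eq_le hXs hYs hZs _ _
  gcongr
  have hC : 0 < c₃ * tailWeight (tail₂ t₀.2.2) :=
    mul_pos hc₃ (prod_pos fun i _ => pow_pos ((pos_of_mem_solutionSet hXs hYs hZs ht₀).2.2 _) _)
  have hU : 0 < quadPart Xs := by unfold quadPart; have := hXs 0; have := hXs 1; positivity
  have hV : 0 < quadPart Ys := by unfold quadPart; have := hYs 0; have := hYs 1; positivity
  have hline := card_le_of_isPrimitiveSolution (A := c₁ * tailWeight (tail₂ t₀.1))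
    (B := c₂ * tailWeight (tail₂ t₀.2.1)) (M := 8 * quadPart Xs) (N := 8 * quadPart Ys) hC hU
    (S := ((solutionSet c₁ c₂ c₃ Xs Ys Zs).filter (tails · = tails t₀)).image quadParts)
    (fun s hs => ?_)
  · refine hline.trans_eq ?_
    have : (0 : ℝ) < quadPart Xs := by exact_mod_cast hU
    simp only [Nat.cast_mul, Nat.cast_ofNat, tails]
    field_simp
    ring
  obtain ⟨t, ht, rfl⟩ := mem_image.1 hs
  obtain ⟨htS, htb⟩ := mem_filter.1 ht
  obtain ⟨hx, hy, -⟩ := mem_dyadicBox_of_mem_solutionSet htS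
  simp only [tails, Prod.mk.injEq] at htb
  refine ⟨htb.1 ▸ htb.2.1 ▸ htb.2.2 ▸ isPrimitiveSolution_quadParts htS,
    le_quadPart_of_mem_dyadicBox hx, quadPart_lt_of_mem_dyadicBox hx,
    (quadPart_lt_of_mem_dyadicBox hy).le⟩

theorem card_filter_tails_eq_le (hc₁ : 0 < c₁) (hc₂ : 0 < c₂) (hc₃ : 0 < c₃) {X D : ℝ}
    (hX : 0 < X) (hXmax : X ≤ maxWeight Xs Ys Zs) (hD₀ : 0 ≤ D)
    (hD : ∀ t ∈ solutionSet c₁ c₂ c₃ Xs Ys Zs, (#(quadPart t.1).divisors *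
      (#(quadPart t.2.1).divisors * #(quadPart t.2.2).divisors) : ℝ) ≤ D)
    {b : Triple n} (hb : b ∈ (solutionSet c₁ c₂ c₃ Xs Ys Zs).image tails) :
    (#((solutionSet c₁ c₂ c₃ Xs Ys Zs).filter (tails · = b)) : ℝ) ≤
      (4096 * quadPart Xs * quadPart Ys * quadPart Zs / X + 1) * D := by
  refine (card_filter_tails_eq_le_mul hXs hYs hZs hc₃ hD₀ hD hb).trans ?_
  gcongr (?_ + 1) * D
  obtain ⟨t₀, ht₀, rfl⟩ := mem_image.1 hb
  -- The size `X` of the equation is carried by the right-hand side `c₃ ∏ zᵢ ^ i`.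
  have hXC : X ≤ 8 * quadPart Zs * (c₃ * tailWeight (tail₂ t₀.2.2)) := by
    have hz := quadPart_lt_of_mem_dyadicBox (mem_dyadicBox_of_mem_solutionSet ht₀).2.2
    have hmax := maxWeight_le_of_mem_solutionSet hc₁ hc₂ hc₃ ht₀
    rw [weight_eq_quadPart_mul t₀.2.2] at hmax
    refine hXmax.trans ?_
    have hw : c₃ * (quadPart t₀.2.2 * tailWeight (tail₂ t₀.2.2)) ≤
        8 * quadPart Zs * (c₃ * tailWeight (tail₂ t₀.2.2)) := by
      rw [mul_left_comm]; exact Nat.mul_le_mul_right _ hz.le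
    exact_mod_cast hmax.trans hw
  have hC : (0 : ℝ) < c₃ * tailWeight (tail₂ t₀.2.2) := by
    exact_mod_cast mul_pos hc₃ (prod_pos fun i _ =>
      pow_pos ((pos_of_mem_solutionSet hXs hYs hZs ht₀).2.2 _) _)
  rw [div_le_div_iff₀ (by exact_mod_cast hC) hX]
  calc 512 * (quadPart Xs : ℝ) * quadPart Ys * X
      ≤ 512 * quadPart Xs * quadPart Ys * (8 * quadPart Zs * (c₃ * tailWeight (tail₂ t₀.2.2))) := by
        gcongr
    _ = _ := by simp only [tails]; ring

theorem card_divisors_quadParts_le {K δ X : ℝ}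
    (hK : ∀ m : ℕ, m ≠ 0 → (#m.divisors : ℝ) ≤ K * (m : ℝ) ^ δ) (hK₀ : 0 ≤ K) (hδ : 0 ≤ δ)
    (hmax : (maxWeight Xs Ys Zs : ℝ) < 2 * X)
    {t : Triple (n + 2)} (ht : t ∈ solutionSet c₁ c₂ c₃ Xs Ys Zs) :
    (#(quadPart t.1).divisors * (#(quadPart t.2.1).divisors * #(quadPart t.2.2).divisors) : ℝ) ≤
      K ^ 3 * (16 * X) ^ (3 * δ) := by
  have hlt : ∀ {W : Fin (n + 2) → ℕ}, weight W ≤ maxWeight Xs Ys Zs → (weight W : ℝ) < 2 * X :=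
    fun hW => (Nat.cast_le.2 hW).trans_lt hmax
  obtain ⟨hx, hy, hz⟩ := mem_dyadicBox_of_mem_solutionSet ht
  have hu := card_divisors_quadPart_le hK hK₀ hδ hXs hx (hlt (le_max_left _ _))
  have hv := card_divisors_quadPart_le hK hK₀ hδ hYs hy
    (hlt ((le_max_left _ _).trans (le_max_right _ _)))
  have hw := card_divisors_quadPart_le hK hK₀ hδ hZs hz
    (hlt ((le_max_right _ _).trans (le_max_right _ _)))
  have hX : 0 ≤ 16 * X := by linarith [(maxWeight Xs Ys Zs).cast_nonneg (α := ℝ)]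
  calc _ ≤ K * (16 * X) ^ δ * (K * (16 * X) ^ δ * (K * (16 * X) ^ δ)) := by gcongr
    _ = K ^ 3 * (16 * X) ^ (3 * δ) := by
      rw [mul_comm 3 δ, Real.rpow_mul hX, show (3 : ℝ) = (3 : ℕ) by norm_num, Real.rpow_natCast]
      ring

/-- There are at most `N / (P₁ P₂)` tails, where `N = ∏ Pᵢ`, and each tail carries at most
`D (4096 P₁ P₂² / X + 1)` solutions. -/
theorem card_solutionSet_le (hc₁ : 0 < c₁) (hc₂ : 0 < c₂) (hc₃ : 0 < c₃) {X D : ℝ}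
    (hX : 0 < X) (hXmax : X ≤ maxWeight Xs Ys Zs) (hD₀ : 0 ≤ D)
    (hD : ∀ t ∈ solutionSet c₁ c₂ c₃ Xs Ys Zs, (#(quadPart t.1).divisors *
      (#(quadPart t.2.1).divisors * #(quadPart t.2.2).divisors) : ℝ) ≤ D) :
    (#(solutionSet c₁ c₂ c₃ Xs Ys Zs) : ℝ) ≤
      D * (4096 * ((∏ i, Xs i * Ys i * Zs i : ℕ) : ℝ) * (Xs 1 * Ys 1 * Zs 1 : ℕ) / X +
        ((∏ i, Xs i * Ys i * Zs i : ℕ) : ℝ) /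
          ((Xs 0 * Ys 0 * Zs 0) * (Xs 1 * Ys 1 * Zs 1) : ℕ)) := by
  set Q := (Xs 0 * Ys 0 * Zs 0) * (Xs 1 * Ys 1 * Zs 1)
  have hQ : (0 : ℝ) < Q := by
    have := hXs 0; have := hYs 0; have := hZs 0; have := hXs 1; have := hYs 1; have := hZs 1
    positivity
  have hQR : (quadPart Xs * quadPart Ys * quadPart Zs : ℝ) = Q * (Xs 1 * Ys 1 * Zs 1 : ℕ) := by
    simp only [quadPart, Q]; push_cast; ring
  have himage : (#((solutionSet c₁ c₂ c₃ Xs Ys Zs).image tails) : ℝ) ≤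
      ((∏ i, Xs i * Ys i * Zs i : ℕ) : ℝ) / Q := by
    rw [le_div_iff₀ hQ]; exact_mod_cast card_image_tails_mul_le
  refine (natCast_card_le_card_image_mul fun b hb =>
    card_filter_tails_eq_le hXs hYs hZs hc₁ hc₂ hc₃ hX hXmax hD₀ hD (b := b) hb).trans ?_
  calc _ ≤ ((∏ i, Xs i * Ys i * Zs i : ℕ) : ℝ) / Q *
        ((4096 * quadPart Xs * quadPart Ys * quadPart Zs / X + 1) * D) := by gcongr
    _ = _ := by
        rw [show (4096 : ℝ) * quadPart Xs * quadPart Ys * quadPart Zs =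
          4096 * (Q * (Xs 1 * Ys 1 * Zs 1 : ℕ)) by rw [← hQR]; ring]
        field_simp

end Fibers

theorem improved_geometry_bound_quadratic (d : ℕ) (hd : 2 ≤ d) (ε : ℝ) (hε : 0 < ε) :
    ∃ C : ℝ, ∀ (lam X : ℝ) (c₁ c₂ c₃ : ℕ) (Xs Ys Zs : Fin d → ℕ),
      0 < lam → 1 ≤ X → Admissible d lam X c₁ c₂ c₃ Xs Ys Zs →
      (B d c₁ c₂ c₃ Xs Ys Zs : ℝ) ≤
        C * (X ^ (lam + ε) /
            (((Xs ⟨0, by omega⟩ * Ys ⟨0, by omega⟩ * Zs ⟨0, by omega⟩) *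
              (Xs ⟨1, by omega⟩ * Ys ⟨1, by omega⟩ * Zs ⟨1, by omega⟩) : ℕ) : ℝ)
          + X ^ (lam - 1 + ε) *
            ((Xs ⟨1, by omega⟩ * Ys ⟨1, by omega⟩ * Zs ⟨1, by omega⟩ : ℕ) : ℝ)) := by
  obtain ⟨n, rfl⟩ : ∃ n, d = n + 2 := ⟨d - 2, by omega⟩
  obtain ⟨K, hK⟩ := exists_card_divisors_le_mul_rpow (ε := ε / 3) (by positivity)
  have hK₀ : 0 ≤ K := zero_le_one.trans (by simpa using hK 1 one_ne_zero)
  refine ⟨8192 * K ^ 3 * 16 ^ ε, fun lam X c₁ c₂ c₃ Xs Ys Zs _ hX hadm => ?_⟩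
  obtain ⟨hc₁, hc₂, hc₃, hXs, hYs, hZs, -, hN, hXmax, hmax⟩ := hadm
  simp only [Fin.zero_eta, Fin.mk_one]
  have hX₀ : 0 < X := one_pos.trans_le hX
  rw [B_eq_card_solutionSet]
  refine (card_solutionSet_le hXs hYs hZs hc₁ hc₂ hc₃ hX₀ hXmax (by positivity)
    fun t ht => card_divisors_quadParts_le hXs hYs hZs hK hK₀ (by positivity) hmax ht).trans ?_
  rw [mul_div_cancel₀ ε three_ne_zero, Real.mul_rpow (by norm_num) hX₀.le, Real.rpow_add hX₀,
    Real.rpow_add hX₀, Real.rpow_sub hX₀, Real.rpow_one]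
  set Q : ℝ := (((Xs 0 * Ys 0 * Zs 0) * (Xs 1 * Ys 1 * Zs 1) : ℕ) : ℝ)
  set R : ℝ := ((Xs 1 * Ys 1 * Zs 1 : ℕ) : ℝ)
  have hM : 0 ≤ K ^ 3 * (16 ^ ε * X ^ ε) * (X ^ lam / Q) := by positivity
  calc _ ≤ K ^ 3 * (16 ^ ε * X ^ ε) * (4096 * (2 * X ^ lam) * R / X + 2 * X ^ lam / Q) := by
        gcongr
    _ = 8192 * K ^ 3 * 16 ^ ε * (X ^ lam * X ^ ε / Q + X ^ lam / X * X ^ ε * R) -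
        8190 * (K ^ 3 * (16 ^ ε * X ^ ε) * (X ^ lam / Q)) := by ring
    _ ≤ _ := by linarith
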